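/- Let P = I − ∇ξ(∇ξᵀ∇ξ)⁻¹∇ξᵀ be the orthogonal projection. Then for all indices i, j, l: Σ_η ∂ᵢξ_η(x) ∂²_{jl}c_η(x) = Σ_{r,r'} (I−P)_{ir}(x) P_{r'l}(x) ∂_{r'}P_{rj}(x), where c is the implicitly defined projection map with c(x)=0. -/

import Mathlib

open Matrix

noncomputable def pd {n : ℕ} (r : Fin n) (f : (Fin n → ℝ) → ℝ) (x : Fin n → ℝ) : ℝ :=
  fderiv ℝ f x (Pi.single r 1)

noncomputable def pd2 {n : ℕ} (r r' : Fin n) (f : (Fin n → ℝ) → ℝ) (x : Fin n → ℝ) : ℝ :=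
  pd r (fun y => pd r' f y) x

noncomputable def Jac {n m : ℕ} (ξ : (Fin n → ℝ) → Fin m → ℝ) (x : Fin n → ℝ) :
    Matrix (Fin n) (Fin m) ℝ :=
  Matrix.of fun i α => pd i (fun y => ξ y α) x

noncomputable def Pmat {n m : ℕ} (ξ : (Fin n → ℝ) → Fin m → ℝ) (x : Fin n → ℝ) :
    Matrix (Fin n) (Fin n) ℝ :=
  1 - Jac ξ x * ((Jac ξ x)ᵀ * Jac ξ x)⁻¹ * (Jac ξ x)ᵀ

section aux

variable {n m : ℕ}

lemma diffAt_prod {ι : Type*} (s : Finset ι) (f : ι → (Fin n → ℝ) → ℝ)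
    {x : Fin n → ℝ} (h : ∀ i ∈ s, DifferentiableAt ℝ (f i) x) :
    DifferentiableAt ℝ (fun y => ∏ i ∈ s, f i y) x := by
  classical
  induction s using Finset.induction_on with
  | empty => simp only [Finset.prod_empty]; exact differentiableAt_const (1:ℝ)
  | insert _ _ ha ih =>
    simp only [Finset.prod_insert ha]
    exact (h _ (Finset.mem_insert_self _ _)).mul (ih fun i hi => h i (Finset.mem_insert_of_mem hi))

lemma diffAt_det {k : ℕ} (A : (Fin n → ℝ) → Matrix (Fin k) (Fin k) ℝ) {x : Fin n → ℝ}
    (hA : ∀ i j, DifferentiableAt ℝ (fun y => A y i j) x) :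
    DifferentiableAt ℝ (fun y => (A y).det) x := by
  simp only [Matrix.det_apply']
  exact DifferentiableAt.fun_sum fun σ _ =>
    (diffAt_prod _ _ fun i _ => hA (σ i) i).const_mul _

lemma diffAt_adjugate {k : ℕ} (A : (Fin n → ℝ) → Matrix (Fin k) (Fin k) ℝ) {x : Fin n → ℝ}
    (hA : ∀ i j, DifferentiableAt ℝ (fun y => A y i j) x) (i j : Fin k) :
    DifferentiableAt ℝ (fun y => (A y).adjugate i j) x := by
  simp only [Matrix.adjugate_apply]
  apply diffAt_det
  intro i' j'
  by_cases h : i' = j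
  · simp only [Matrix.updateRow_apply, h, if_true]
    exact differentiableAt_const _
  · simp only [Matrix.updateRow_apply, h, if_false]
    exact hA i' j'

lemma contDiff_jac (ξ : (Fin n → ℝ) → Fin m → ℝ) (hξ : ContDiff ℝ 2 ξ) (r : Fin n) (α : Fin m) :
    ContDiff ℝ 1 (fun y => Jac ξ y r α) := by
  have h : ContDiff ℝ 1 (fderiv ℝ (fun y => ξ y α)) :=
    (contDiff_pi.1 hξ α).fderiv_right (by norm_num)
  exact h.clm_apply contDiff_const

lemma diffAt_jac (ξ : (Fin n → ℝ) → Fin m → ℝ) (hξ : ContDiff ℝ 2 ξ) (r : Fin n) (α : Fin m)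
    (x : Fin n → ℝ) : DifferentiableAt ℝ (fun y => Jac ξ y r α) x :=
  ((contDiff_jac ξ hξ r α).differentiable one_ne_zero).differentiableAt

lemma diffAt_gram (ξ : (Fin n → ℝ) → Fin m → ℝ) (hξ : ContDiff ℝ 2 ξ) (η α : Fin m)
    (x : Fin n → ℝ) : DifferentiableAt ℝ (fun y => ((Jac ξ y)ᵀ * Jac ξ y) η α) x := by
  simp only [Matrix.mul_apply, Matrix.transpose_apply]
  exact DifferentiableAt.fun_sum fun r _ => (diffAt_jac ξ hξ r η x).mul (diffAt_jac ξ hξ r α x)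

lemma inv_entry {k : ℕ} (B : Matrix (Fin k) (Fin k) ℝ) (η α : Fin k) :
    B⁻¹ η α = (B.det)⁻¹ * B.adjugate η α := by
  rw [Matrix.inv_def, Ring.inverse_eq_inv']
  rfl

lemma Pmat_entry (ξ : (Fin n → ℝ) → Fin m → ℝ) (y : Fin n → ℝ) (r j : Fin n) :
    Pmat ξ y r j =
      (if r = j then (1:ℝ) else 0) -
      ∑ α, ∑ η, Jac ξ y r η * ((((Jac ξ y)ᵀ * Jac ξ y).det)⁻¹ *
        ((Jac ξ y)ᵀ * Jac ξ y).adjugate η α) * Jac ξ y j α := by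
  simp only [Pmat, Matrix.sub_apply, Matrix.one_apply, Matrix.mul_apply, Matrix.transpose_apply,
    inv_entry, Finset.sum_mul]

lemma diffAt_Pmat (ξ : (Fin n → ℝ) → Fin m → ℝ) (hξ : ContDiff ℝ 2 ξ) {x : Fin n → ℝ}
    (hrank : IsUnit ((Jac ξ x)ᵀ * Jac ξ x).det) (r j : Fin n) :
    DifferentiableAt ℝ (fun y => Pmat ξ y r j) x := by
  have hne : ((Jac ξ x)ᵀ * Jac ξ x).det ≠ 0 := hrank.ne_zero
  have hdet : DifferentiableAt ℝ (fun y => ((Jac ξ y)ᵀ * Jac ξ y).det) x :=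
    diffAt_det _ (fun η α => diffAt_gram ξ hξ η α x)
  simp only [Pmat_entry]
  apply DifferentiableAt.sub (differentiableAt_const _)
  apply DifferentiableAt.fun_sum; intro α _
  apply DifferentiableAt.fun_sum; intro η _
  exact ((diffAt_jac ξ hξ r η x).mul
    ((hdet.inv hne).mul (diffAt_adjugate _ (fun i' j' => diffAt_gram ξ hξ i' j' x) η α))).mul
    (diffAt_jac ξ hξ j α x)

lemma key_zero (ξ : (Fin n → ℝ) → Fin m → ℝ) (y : Fin n → ℝ)
    (hdet : IsUnit ((Jac ξ y)ᵀ * Jac ξ y).det) (α : Fin m) (j : Fin n) :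
    ∑ r, Jac ξ y r α * Pmat ξ y r j = 0 := by
  have h : (Jac ξ y)ᵀ * Pmat ξ y = 0 := by
    unfold Pmat
    rw [Matrix.mul_sub, Matrix.mul_one,
      show (Jac ξ y)ᵀ * (Jac ξ y * ((Jac ξ y)ᵀ * Jac ξ y)⁻¹ * (Jac ξ y)ᵀ) =
        (((Jac ξ y)ᵀ * Jac ξ y) * ((Jac ξ y)ᵀ * Jac ξ y)⁻¹) * (Jac ξ y)ᵀ by
          simp [Matrix.mul_assoc],
      Matrix.mul_nonsing_inv _ hdet, Matrix.one_mul, sub_self]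
  have := congrFun (congrFun h α) j
  simpa [Matrix.mul_apply, Matrix.transpose_apply] using this

lemma key_cont (ξ : (Fin n → ℝ) → Fin m → ℝ) (hξ : ContDiff ℝ 2 ξ) :
    Continuous (fun y => ((Jac ξ y)ᵀ * Jac ξ y).det) := by
  apply Continuous.matrix_det
  apply continuous_matrix
  intro η α
  show Continuous fun y => ((Jac ξ y)ᵀ * Jac ξ y) η α
  simp only [Matrix.mul_apply, Matrix.transpose_apply]
  exact continuous_finset_sum _ fun r _ =>
    ((contDiff_jac ξ hξ r η).continuous).mul ((contDiff_jac ξ hξ r α).continuous)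

lemma neg_sum' {ι : Type*} (s : Finset ι) (f : ι → ℝ) :
    -∑ i ∈ s, f i = ∑ i ∈ s, -f i := by
  simp

lemma pd2_symm (f : (Fin n → ℝ) → ℝ) (hf : ContDiff ℝ 2 f) (r r' : Fin n) (x : Fin n → ℝ) :
    pd2 r r' f x = pd2 r' r f x := by
  have hsymm : IsSymmSndFDerivAt ℝ f x :=
    hf.contDiffAt.isSymmSndFDerivAt (by rw [minSmoothness_of_isRCLikeNormedField])
  have hd : DifferentiableAt ℝ (fderiv ℝ f) x :=
    ((hf.fderiv_right (m := 1) (by norm_num)).differentiable one_ne_zero).differentiableAt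
  have key : ∀ v w : Fin n → ℝ,
      fderiv ℝ (fun y => fderiv ℝ f y v) x w = fderiv ℝ (fderiv ℝ f) x w v := by
    intro v w
    rw [fderiv_clm_apply hd (differentiableAt_const v)]
    simp
  show fderiv ℝ (fun y => fderiv ℝ f y (Pi.single r' 1)) x (Pi.single r 1) =
    fderiv ℝ (fun y => fderiv ℝ f y (Pi.single r 1)) x (Pi.single r' 1)
  rw [key, key]
  exact hsymm _ _

/-- The key relation coming from differentiating `Jᵀ P = 0`. -/
lemma key_rel (ξ : (Fin n → ℝ) → Fin m → ℝ) (hξ : ContDiff ℝ 2 ξ) {x : Fin n → ℝ}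
    (hrank : IsUnit ((Jac ξ x)ᵀ * Jac ξ x).det) (α : Fin m) (j r' : Fin n) :
    ∑ r, Jac ξ x r α * pd r' (fun y => Pmat ξ y r j) x =
      -∑ r, pd2 r' r (fun y => ξ y α) x * Pmat ξ x r j := by
  have hne : ((Jac ξ x)ᵀ * Jac ξ x).det ≠ 0 := hrank.ne_zero
  -- the function is eventually 0
  have hev : (fun y => ∑ r, Jac ξ y r α * Pmat ξ y r j) =ᶠ[nhds x] (fun _ => (0:ℝ)) := by
    have hop : IsOpen {y : Fin n → ℝ | ((Jac ξ y)ᵀ * Jac ξ y).det ≠ 0} :=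
      isOpen_compl_singleton.preimage (key_cont ξ hξ)
    filter_upwards [hop.mem_nhds hne] with y hy
    exact key_zero ξ y (isUnit_iff_ne_zero.2 hy) α j
  have h0 : fderiv ℝ (fun y => ∑ r, Jac ξ y r α * Pmat ξ y r j) x = 0 := by
    rw [hev.fderiv_eq]
    exact fderiv_const_apply 0
  have hJ : ∀ r : Fin n, DifferentiableAt ℝ (fun y => Jac ξ y r α) x :=
    fun r => diffAt_jac ξ hξ r α x
  have hP : ∀ r : Fin n, DifferentiableAt ℝ (fun y => Pmat ξ y r j) x :=
    fun r => diffAt_Pmat ξ hξ hrank r j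
  have hsum : fderiv ℝ (fun y => ∑ r, Jac ξ y r α * Pmat ξ y r j) x =
      ∑ r, fderiv ℝ (fun y => Jac ξ y r α * Pmat ξ y r j) x :=
    fderiv_fun_sum fun r _ => (hJ r).mul (hP r)
  have expand : ∀ r : Fin n,
      fderiv ℝ (fun y => Jac ξ y r α * Pmat ξ y r j) x (Pi.single r' 1) =
      Jac ξ x r α * pd r' (fun y => Pmat ξ y r j) x +
        Pmat ξ x r j * pd2 r' r (fun y => ξ y α) x := by
    intro r
    rw [fderiv_fun_mul (hJ r) (hP r)]
    simp only [ContinuousLinearMap.add_apply, ContinuousLinearMap.smul_apply, smul_eq_mul]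
    rfl
  have := congrArg (fun L : (Fin n → ℝ) →L[ℝ] ℝ => L (Pi.single r' 1)) (h0.symm.trans hsum)
  simp only [ContinuousLinearMap.zero_apply, ContinuousLinearMap.sum_apply] at this
  rw [Finset.sum_congr rfl (fun r _ => expand r), Finset.sum_add_distrib] at this
  have := this.symm
  rw [add_eq_zero_iff_eq_neg] at this
  rw [this, ← Finset.sum_neg_distrib, ← Finset.sum_neg_distrib]
  exact Finset.sum_congr rfl fun r _ => by ring

end aux

theorem jacobian_contracted_with_second_derivative_of_c {n m : ℕ}
    (ξ : (Fin n → ℝ) → Fin m → ℝ) (x : Fin n → ℝ)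
    (hξ : ContDiff ℝ 2 ξ) (hx : ξ x = 0)
    (hrank : IsUnit ((Jac ξ x)ᵀ * Jac ξ x).det)
    (c : (Fin n → ℝ) → Fin m → ℝ) (hc0 : c x = 0)
    (hc2 : ∀ η j l, pd2 j l (fun y => c y η) x =
      -∑ α, ∑ r, ∑ r', ((Jac ξ x)ᵀ * Jac ξ x)⁻¹ η α *
        pd2 r r' (fun y => ξ y α) x * Pmat ξ x r j * Pmat ξ x r' l) :
    ∀ i j l, ∑ η, Jac ξ x i η * pd2 j l (fun y => c y η) x =
      ∑ r, ∑ r', (1 - Pmat ξ x) i r * Pmat ξ x r' l *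
        pd r' (fun y => Pmat ξ y r j) x := by
  intro i j l
  -- notation
  have hone : ∀ r : Fin n, (1 - Pmat ξ x) i r =
      ∑ α, ∑ η, Jac ξ x i η * ((Jac ξ x)ᵀ * Jac ξ x)⁻¹ η α * Jac ξ x r α := by
    intro r
    have : (1 : Matrix (Fin n) (Fin n) ℝ) - Pmat ξ x =
        Jac ξ x * ((Jac ξ x)ᵀ * Jac ξ x)⁻¹ * (Jac ξ x)ᵀ := by
      unfold Pmat; exact sub_sub_cancel _ _
    rw [this]
    simp only [Matrix.mul_apply, Matrix.transpose_apply, Finset.sum_mul]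
  -- Schwarz for ξ components
  have hsch : ∀ (α : Fin m) (r r' : Fin n),
      pd2 r r' (fun y => ξ y α) x = pd2 r' r (fun y => ξ y α) x :=
    fun α r r' => pd2_symm _ (contDiff_pi.1 hξ α) r r' x
  calc ∑ η, Jac ξ x i η * pd2 j l (fun y => c y η) x
      = -∑ η, ∑ α, ∑ r, ∑ r', Jac ξ x i η * (((Jac ξ x)ᵀ * Jac ξ x)⁻¹ η α *
          pd2 r' r (fun y => ξ y α) x * Pmat ξ x r j * Pmat ξ x r' l) := by
        rw [← Finset.sum_neg_distrib]
        refine Finset.sum_congr rfl fun η _ => ?_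
        rw [hc2 η j l, mul_neg, Finset.mul_sum]
        refine congrArg Neg.neg (Finset.sum_congr rfl fun α _ => ?_)
        rw [Finset.mul_sum]
        refine Finset.sum_congr rfl fun r _ => ?_
        rw [Finset.mul_sum]
        refine Finset.sum_congr rfl fun r' _ => ?_
        rw [hsch α r r']
    _ = ∑ η, ∑ α, ∑ r, ∑ r', -(Jac ξ x i η * (((Jac ξ x)ᵀ * Jac ξ x)⁻¹ η α *
          pd2 r' r (fun y => ξ y α) x * Pmat ξ x r j * Pmat ξ x r' l)) := by
        rw [neg_sum']
        refine Finset.sum_congr rfl fun η _ => ?_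
        rw [neg_sum']
        refine Finset.sum_congr rfl fun α _ => ?_
        rw [neg_sum']
        refine Finset.sum_congr rfl fun r _ => ?_
        rw [neg_sum']
    _ = ∑ η, ∑ α, ∑ r', ∑ r, -(Jac ξ x i η * (((Jac ξ x)ᵀ * Jac ξ x)⁻¹ η α *
          pd2 r' r (fun y => ξ y α) x * Pmat ξ x r j * Pmat ξ x r' l)) :=
        Finset.sum_congr rfl fun η _ => Finset.sum_congr rfl fun α _ => Finset.sum_comm
    _ = ∑ η, ∑ r', ∑ α, ∑ r, -(Jac ξ x i η * (((Jac ξ x)ᵀ * Jac ξ x)⁻¹ η α *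
          pd2 r' r (fun y => ξ y α) x * Pmat ξ x r j * Pmat ξ x r' l)) :=
        Finset.sum_congr rfl fun η _ => Finset.sum_comm
    _ = ∑ r', ∑ η, ∑ α, ∑ r, -(Jac ξ x i η * (((Jac ξ x)ᵀ * Jac ξ x)⁻¹ η α *
          pd2 r' r (fun y => ξ y α) x * Pmat ξ x r j * Pmat ξ x r' l)) :=
        Finset.sum_comm
    _ = ∑ r', ∑ α, ∑ η, ∑ r, -(Jac ξ x i η * (((Jac ξ x)ᵀ * Jac ξ x)⁻¹ η α *
          pd2 r' r (fun y => ξ y α) x * Pmat ξ x r j * Pmat ξ x r' l)) :=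
        Finset.sum_congr rfl fun r' _ => Finset.sum_comm
    _ = ∑ r', ∑ α, ∑ η, (Jac ξ x i η * ((Jac ξ x)ᵀ * Jac ξ x)⁻¹ η α * Pmat ξ x r' l) *
          (-∑ r, pd2 r' r (fun y => ξ y α) x * Pmat ξ x r j) := by
        refine Finset.sum_congr rfl fun r' _ => Finset.sum_congr rfl fun α _ =>
          Finset.sum_congr rfl fun η _ => ?_
        rw [mul_neg, Finset.mul_sum, ← neg_sum']
        exact congrArg Neg.neg (Finset.sum_congr rfl fun r _ => by ring)
    _ = ∑ r', ∑ α, ∑ η, (Jac ξ x i η * ((Jac ξ x)ᵀ * Jac ξ x)⁻¹ η α * Pmat ξ x r' l) *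
          (∑ r, Jac ξ x r α * pd r' (fun y => Pmat ξ y r j) x) := by
        refine Finset.sum_congr rfl fun r' _ => Finset.sum_congr rfl fun α _ =>
          Finset.sum_congr rfl fun η _ => ?_
        rw [key_rel ξ hξ hrank α j r']
    _ = ∑ r, ∑ r', (1 - Pmat ξ x) i r * Pmat ξ x r' l *
          pd r' (fun y => Pmat ξ y r j) x := by
        conv_rhs => rw [Finset.sum_comm]
        refine Finset.sum_congr rfl fun r' _ => ?_
        conv_rhs => simp only [hone, Finset.sum_mul]
        conv_rhs => rw [Finset.sum_comm]
        refine Finset.sum_congr rfl fun α _ => ?_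
        conv_rhs => rw [Finset.sum_comm]
        refine Finset.sum_congr rfl fun η _ => ?_
        rw [Finset.mul_sum]
        exact Finset.sum_congr rfl fun r _ => by ring
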